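/- In any topological space X, every SC*-open set is gSC*-open, and every gSC*-open set is rgSC*-open. -/

import Mathlib

open Set Topology

variable {X : Type*} [TopologicalSpace X]

/-- A set is semi-open if `A ⊆ cl (int A)`. -/
def SemiOpen (A : Set X) : Prop := A ⊆ closure (interior A)

/-- A set is semi-closed if its complement is semi-open. -/
def SemiClosed (A : Set X) : Prop := SemiOpen Aᶜ

/-- Semi-closure: the intersection of all semi-closed sets containing `A`. -/
def scl (A : Set X) : Set X := ⋂₀ {B : Set X | SemiClosed B ∧ A ⊆ B}

/-- A set is c*-open if `int (cl U) ⊆ U ⊆ cl (int U)`. -/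
def CStarOpen (U : Set X) : Prop :=
  interior (closure U) ⊆ U ∧ U ⊆ closure (interior U)

/-- A set is SC*-closed if `scl A ⊆ U` whenever `A ⊆ U` and `U` is c*-open. -/
def SCStarClosed (A : Set X) : Prop :=
  ∀ U : Set X, A ⊆ U → CStarOpen U → scl A ⊆ U

/-- A set is SC*-open if its complement is SC*-closed. -/
def SCStarOpen (A : Set X) : Prop := SCStarClosed Aᶜ

/-- SC*-closure: the intersection of all SC*-closed sets containing `A`. -/
def SCcl (A : Set X) : Set X := ⋂₀ {B : Set X | SCStarClosed B ∧ A ⊆ B}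

/-- SC*-interior: the union of all SC*-open sets contained in `A`. -/
def SCint (A : Set X) : Set X := ⋃₀ {B : Set X | SCStarOpen B ∧ B ⊆ A}

/-- Regularly open: `A = int (cl A)`. -/
def RegOpen (A : Set X) : Prop := A = interior (closure A)

/-- Regularly closed: `A = cl (int A)`. -/
def RegClosed (A : Set X) : Prop := A = closure (interior A)

/-- gSC*-closed: `SCcl A ⊆ U` whenever `A ⊆ U` and `U` is open. -/
def GSCStarClosed (A : Set X) : Prop :=
  ∀ U : Set X, A ⊆ U → IsOpen U → SCcl A ⊆ U

/-- gSC*-open: the complement is gSC*-closed. -/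
def GSCStarOpen (A : Set X) : Prop := GSCStarClosed Aᶜ

/-- SC*g-closed: `SCcl A ⊆ U` whenever `A ⊆ U` and `U` is SC*-open. -/
def SCStarGClosed (A : Set X) : Prop :=
  ∀ U : Set X, A ⊆ U → SCStarOpen U → SCcl A ⊆ U

/-- Regularly SC*-open: there is a regularly open `U` with `U ⊆ A ⊆ SCcl U`. -/
def RegSCStarOpen (A : Set X) : Prop :=
  ∃ U : Set X, RegOpen U ∧ U ⊆ A ∧ A ⊆ SCcl U

/-- rgSC*-closed: `SCcl A ⊆ U` whenever `A ⊆ U` and `U` is regularly SC*-open. -/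
def RGSCStarClosed (A : Set X) : Prop :=
  ∀ U : Set X, A ⊆ U → RegSCStarOpen U → SCcl A ⊆ U

/-- rgSC*-open: the complement is rgSC*-closed. -/
def RGSCStarOpen (A : Set X) : Prop := RGSCStarClosed Aᶜ

/-- α-open: `A ⊆ int (cl (int A))`. -/
def AlphaOpen (A : Set X) : Prop := A ⊆ interior (closure (interior A))

/-- α-closed: the complement is α-open. -/
def AlphaClosed (A : Set X) : Prop := AlphaOpen Aᶜ

/-- α-closure: the intersection of all α-closed sets containing `A`. -/
def acl (A : Set X) : Set X := ⋂₀ {B : Set X | AlphaClosed B ∧ A ⊆ B}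

/-- gα-closed: `acl A ⊆ U` whenever `A ⊆ U` and `U` is α-open. -/
def GAlphaClosed (A : Set X) : Prop :=
  ∀ U : Set X, A ⊆ U → AlphaOpen U → acl A ⊆ U

/-- Regularly α-open: there is a regularly open `U` with `U ⊆ A ⊆ acl U`. -/
def RegAlphaOpen (A : Set X) : Prop :=
  ∃ U : Set X, RegOpen U ∧ U ⊆ A ∧ A ⊆ acl U

/-- rgα-closed: `acl A ⊆ U` whenever `A ⊆ U` and `U` is regularly α-open. -/
def RGAlphaClosed (A : Set X) : Prop :=
  ∀ U : Set X, A ⊆ U → RegAlphaOpen U → acl A ⊆ U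

/-- Almost SC*-normal space. -/
def AlmostSCStarNormal (X : Type*) [TopologicalSpace X] : Prop :=
  ∀ A B : Set X, IsClosed A → RegClosed B → Disjoint A B →
    ∃ U V : Set X, SCStarOpen U ∧ SCStarOpen V ∧ A ⊆ U ∧ B ⊆ V ∧ Disjoint U V

/-- Almost normal space. -/
def AlmostNormal (X : Type*) [TopologicalSpace X] : Prop :=
  ∀ A B : Set X, IsClosed A → RegClosed B → Disjoint A B →
    ∃ U V : Set X, IsOpen U ∧ IsOpen V ∧ A ⊆ U ∧ B ⊆ V ∧ Disjoint U V

/-- Normal space. -/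
def NormalSp (X : Type*) [TopologicalSpace X] : Prop :=
  ∀ A B : Set X, IsClosed A → IsClosed B → Disjoint A B →
    ∃ U V : Set X, IsOpen U ∧ IsOpen V ∧ A ⊆ U ∧ B ⊆ V ∧ Disjoint U V

/-! Regularly open sets are semi-closed, hence SC*-closed, hence equal to their own SC*-closure.
So a regularly SC*-open set `U` with kernel `V` satisfies `V ⊆ U ⊆ SCcl V = V`: it is open. -/

theorem subset_SCcl (A : Set X) : A ⊆ SCcl A :=
  subset_sInter fun _ hB => hB.2

theorem SCcl_subset_of_SCStarClosed {A B : Set X} (hB : SCStarClosed B) (hAB : A ⊆ B) :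
    SCcl A ⊆ B :=
  sInter_subset_of_mem ⟨hB, hAB⟩

theorem SCStarClosed.SCcl_eq {A : Set X} (hA : SCStarClosed A) : SCcl A = A :=
  (SCcl_subset_of_SCStarClosed hA subset_rfl).antisymm (subset_SCcl A)

theorem semiClosed_iff {A : Set X} : SemiClosed A ↔ interior (closure A) ⊆ A := by
  rw [SemiClosed, SemiOpen, interior_compl, closure_compl, compl_subset_compl]

theorem scl_subset_of_semiClosed {A B : Set X} (hB : SemiClosed B) (hAB : A ⊆ B) :
    scl A ⊆ B :=
  sInter_subset_of_mem ⟨hB, hAB⟩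

theorem SemiClosed.scStarClosed {A : Set X} (hA : SemiClosed A) : SCStarClosed A :=
  fun _ hAU _ => (scl_subset_of_semiClosed hA subset_rfl).trans hAU

theorem RegOpen.scStarClosed {V : Set X} (hV : RegOpen V) : SCStarClosed V :=
  (semiClosed_iff.mpr hV.ge).scStarClosed

theorem RegSCStarOpen.isOpen {U : Set X} (hU : RegSCStarOpen U) : IsOpen U := by
  obtain ⟨V, hV, hVU, hUV⟩ := hU
  rw [hV.scStarClosed.SCcl_eq] at hUV
  rw [hUV.antisymm hVU, hV]
  exact isOpen_interior

theorem SCStarClosed.gscStarClosed {A : Set X} (hA : SCStarClosed A) : GSCStarClosed A :=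
  fun _ hAU _ => hA.SCcl_eq.subset.trans hAU

theorem GSCStarClosed.rgscStarClosed {A : Set X} (hA : GSCStarClosed A) : RGSCStarClosed A :=
  fun U hAU hU => hA U hAU hU.isOpen

theorem stmt18 {X : Type*} [TopologicalSpace X] (A : Set X) :
    (SCStarOpen A → GSCStarOpen A) ∧ (GSCStarOpen A → RGSCStarOpen A) :=
  ⟨SCStarClosed.gscStarClosed, GSCStarClosed.rgscStarClosed⟩
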